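/- arXiv:1501.06152 — 3 statements merged into one kernel-verified Lean document; each statement's English description precedes it below -/
import Mathlib

section
/- Let G be a set and F a subgroup of the group of bijections of G, and write A ≤ B if A is F-equidecomposable with a subset of B. If A ≤ B and B ≤ A, then A and B are F-equidecomposable (a Schröder–Bernstein theorem for F-equidecomposability). -/
/-- `A` and `B` are `F`-equidecomposable: there are finite partitions of `A` and `B`
into pairwise disjoint pieces and elements of `F` carrying the pieces of `A`
onto the pieces of `B`. -/
def Equidec {G : Type*} (F : Subgroup (Equiv.Perm G)) (A B : Set G) : Prop :=
  ∃ (m : ℕ) (As Bs : Fin m → Set G) (φ : Fin m → Equiv.Perm G),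
    (∀ i, φ i ∈ F) ∧
    Pairwise (Function.onFun Disjoint As) ∧
    Pairwise (Function.onFun Disjoint Bs) ∧
    (⋃ i, As i) = A ∧ (⋃ i, Bs i) = B ∧
    ∀ i, (φ i) '' As i = Bs i

/-!
An equidecomposition `A ≅ B` is the same thing as a bijection `A → B` that agrees at each point
with one of finitely many elements of `F`. Schröder–Bernstein in the form
`Function.Embedding.schroeder_bernstein_of_rel` turns injections `f : A → B` and `g : B → A` into
a bijection each of whose values is `f a` or `g⁻¹ a`; so it is given pointwise by the finitely
many elements of `F` used by `f`, together with the inverses of those used by `g`.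
-/

open Set Function Pointwise Equiv

section

variable {G : Type*} {F : Subgroup (Perm G)} {A B : Set G}

def IsPiecewiseIn (F : Subgroup (Perm G)) (f : A → B) : Prop :=
  ∃ S : Set (Perm G), S.Finite ∧ S ⊆ F ∧ ∀ a : A, ∃ φ ∈ S, φ a = f a

lemma Equidec.of_finite {ι : Type*} [Finite ι] (As Bs : ι → Set G) (φ : ι → Perm G)
    (hφ : ∀ i, φ i ∈ F) (hAs : Pairwise (Disjoint on As)) (hBs : Pairwise (Disjoint on Bs))
    (hA : ⋃ i, As i = A) (hB : ⋃ i, Bs i = B) (himg : ∀ i, φ i '' As i = Bs i) :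
    Equidec F A B := by
  obtain ⟨m, ⟨e⟩⟩ := Finite.exists_equiv_fin ι
  refine ⟨m, As ∘ e.symm, Bs ∘ e.symm, φ ∘ e.symm, fun i => hφ _,
    hAs.comp_of_injective e.symm.injective, hBs.comp_of_injective e.symm.injective,
    ?_, ?_, fun i => himg _⟩
  · rw [← hA]; exact e.symm.surjective.iUnion_comp As
  · rw [← hB]; exact e.symm.surjective.iUnion_comp Bs

lemma Equidec.exists_bijective (h : Equidec F A B) :
    ∃ f : A → B, Bijective f ∧ IsPiecewiseIn F f := by
  obtain ⟨m, As, Bs, φ, hφ, hAs, hBs, rfl, rfl, himg⟩ := h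
  choose i hi using fun a : ⋃ j, As j => mem_iUnion.1 a.2
  have hφi (a : ⋃ j, As j) : φ (i a) a ∈ ⋃ j, Bs j :=
    mem_iUnion.2 ⟨i a, himg _ ▸ mem_image_of_mem _ (hi a)⟩
  refine ⟨fun a => ⟨φ (i a) a, hφi a⟩, ⟨fun a a' haa' => ?_, fun b => ?_⟩,
    range φ, finite_range φ, range_subset_iff.2 hφ, fun a => ⟨φ (i a), mem_range_self _, rfl⟩⟩
  · have hb : φ (i a) a = φ (i a') a' := congrArg Subtype.val haa'
    have hi' : i a = i a' := by
      by_contra hne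
      refine disjoint_left.1 (hBs hne) ?_ (hb ▸ himg (i a') ▸ mem_image_of_mem _ (hi a'))
      exact himg (i a) ▸ mem_image_of_mem _ (hi a)
    rw [hi'] at hb
    exact Subtype.ext ((φ (i a')).injective hb)
  · obtain ⟨j, hj⟩ := mem_iUnion.1 b.2
    obtain ⟨x, hx, hxb⟩ := (himg j).symm ▸ hj
    have hxA : x ∈ ⋃ j, As j := mem_iUnion.2 ⟨j, hx⟩
    have hij : i ⟨x, hxA⟩ = j := by
      by_contra hne
      exact disjoint_left.1 (hAs hne) (hi ⟨x, hxA⟩) hx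
    exact ⟨⟨x, hxA⟩, Subtype.ext (by simp only [hij, hxb])⟩

lemma Equidec.of_bijective {f : A → B} (hf : Bijective f) (hpw : IsPiecewiseIn F f) :
    Equidec F A B := by
  obtain ⟨S, hS, hSF, hfS⟩ := hpw
  choose c hcS hc using hfS
  have := hS.to_subtype
  refine Equidec.of_finite (fun φ : S => (↑) '' {a | c a = φ})
    (fun φ : S => (↑) '' (f '' {a | c a = φ})) (↑) (fun φ => hSF φ.2) ?_ ?_ ?_ ?_ ?_
  · intro φ ψ hne
    refine disjoint_left.2 ?_
    rintro _ ⟨a, ha, rfl⟩ ⟨a', ha', haa'⟩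
    exact hne (Subtype.ext (ha ▸ ha' ▸ congrArg c (Subtype.ext haa').symm))
  · intro φ ψ hne
    refine disjoint_left.2 ?_
    rintro _ ⟨_, ⟨a, ha, rfl⟩, rfl⟩ ⟨_, ⟨a', ha', rfl⟩, haa'⟩
    exact hne (Subtype.ext (ha ▸ ha' ▸ congrArg c (hf.1 (Subtype.ext haa').symm)))
  · refine subset_antisymm (iUnion_subset fun _ => Subtype.coe_image_subset _ _) fun x hx => ?_
    exact mem_iUnion.2 ⟨⟨c ⟨x, hx⟩, hcS _⟩, ⟨x, hx⟩, rfl, rfl⟩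
  · refine subset_antisymm (iUnion_subset fun _ => Subtype.coe_image_subset _ _) fun y hy => ?_
    obtain ⟨a, ha⟩ := hf.2 ⟨y, hy⟩
    exact mem_iUnion.2 ⟨⟨c a, hcS a⟩, ⟨y, hy⟩, ⟨a, rfl, ha⟩, rfl⟩
  · intro φ
    rw [image_image, image_image]
    refine image_congr fun a ha => ?_
    rw [← hc a, ha]

lemma Equidec.exists_injective_of_subset {C : Set G} (h : Equidec F A C) (hCB : C ⊆ B) :
    ∃ f : A → B, Injective f ∧ IsPiecewiseIn F f := by
  obtain ⟨f, hf, hfF⟩ := h.exists_bijective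
  exact ⟨inclusion hCB ∘ f, (inclusion_injective hCB).comp hf.1, hfF⟩

theorem IsPiecewiseIn.schroeder_bernstein {f : A → B} {g : B → A} (hf : Injective f)
    (hg : Injective g) (hfF : IsPiecewiseIn F f) (hgF : IsPiecewiseIn F g) :
    ∃ h : A → B, Bijective h ∧ IsPiecewiseIn F h := by
  obtain ⟨S, hS, hSF, hfS⟩ := hfF
  obtain ⟨T, hT, hTF, hgT⟩ := hgF
  have hgT' (b : B) : ∃ φ ∈ S ∪ T⁻¹, φ (g b) = b := by
    obtain ⟨ψ, hψ, hψb⟩ := hgT b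
    exact ⟨ψ⁻¹, Or.inr (inv_mem_inv.2 hψ), Perm.inv_eq_iff_eq.2 hψb.symm⟩
  obtain ⟨h, hh, hhST⟩ := Embedding.schroeder_bernstein_of_rel hf hg
    (fun a b => ∃ φ ∈ S ∪ T⁻¹, φ a = b)
    (fun a => (hfS a).imp fun _ hφ => ⟨Or.inl hφ.1, hφ.2⟩) hgT'
  exact ⟨h, hh, S ∪ T⁻¹, hS.union hT.inv,
    union_subset hSF fun φ hφ => inv_mem_iff.1 (hTF hφ), hhST⟩

end

/-- Schröder–Bernstein for `F`-equidecomposability: if `A ≤ B` and `B ≤ A`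
then `A ≅ B`. -/
theorem stmt5 {G : Type*} (F : Subgroup (Equiv.Perm G)) (A B : Set G)
    (hAB : ∃ C ⊆ B, Equidec F A C) (hBA : ∃ D ⊆ A, Equidec F B D) :
    Equidec F A B := by
  obtain ⟨C, hCB, hAC⟩ := hAB
  obtain ⟨D, hDA, hBD⟩ := hBA
  obtain ⟨f, hf, hfF⟩ := hAC.exists_injective_of_subset hCB
  obtain ⟨g, hg, hgF⟩ := hBD.exists_injective_of_subset hDA
  obtain ⟨h, hh, hhF⟩ := hfF.schroeder_bernstein hf hg hgF
  exact Equidec.of_bijective hh hhF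
end

section
/- Let G be a set and F a subgroup of the group of bijections of G. Then G is F-amenable if and only if G admits no F-paradoxical decomposition (Tarski's alternative for F-actions). -/
/-!
If some finite `K ⊆ F` doubles every finite set, `2 * #A ≤ #(K • A)`, Hall's marriage theorem
gives an injection of two copies of `G` into `G` that moves each point by an element of `K`. A
Schröder–Bernstein argument turns its two images into a set `D` with `G ~ D` and `G ~ Dᶜ`, which
is a paradoxical decomposition. Otherwise, with `L = K ∪ {1}`, pick `N` with `r ^ N > 2` and a
finite `A` that `L ^ N` does not double: the sizes `#(L ^ k • A)` cannot all grow by the factor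
`r`, and a step `k` where they do not makes `L ^ k • A` almost `K`-invariant. Along these Følner
sets an ultralimit of the counting densities is an `F`-invariant mean. Conversely, an invariant
mean would give a paradoxical decomposition measure `2`.
-/

/-- An `F`-paradoxical decomposition of `G`: a partition of `G` into nonempty
pieces `A₁,…,Aₙ,B₁,…,Bₘ` together with bijections in `F` such that the
images of the `A`-pieces partition `G` and the images of the `B`-pieces partition `G`. -/
def Paradoxical {G : Type*} (F : Set (Equiv.Perm G)) : Prop :=
  ∃ (n m : ℕ) (A : Fin n → Set G) (B : Fin m → Set G)
    (φ : Fin n → Equiv.Perm G) (ψ : Fin m → Equiv.Perm G),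
    (∀ i, φ i ∈ F) ∧ (∀ j, ψ j ∈ F) ∧
    (∀ i, (A i).Nonempty) ∧ (∀ j, (B j).Nonempty) ∧
    Pairwise (Function.onFun Disjoint A) ∧
    Pairwise (Function.onFun Disjoint B) ∧
    (∀ i j, Disjoint (A i) (B j)) ∧
    ((⋃ i, A i) ∪ ⋃ j, B j) = Set.univ ∧
    Pairwise (Function.onFun Disjoint (fun i => (φ i) '' (A i))) ∧
    (⋃ i, (φ i) '' (A i)) = Set.univ ∧
    Pairwise (Function.onFun Disjoint (fun j => (ψ j) '' (B j))) ∧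
    (⋃ j, (ψ j) '' (B j)) = Set.univ

/-- A finitely additive probability measure on the power set of G. -/
def IsFAProb {G : Type*} (μ : Set G → ℝ) : Prop :=
  μ Set.univ = 1 ∧ (∀ A : Set G, 0 ≤ μ A) ∧
  ∀ A B : Set G, Disjoint A B → μ (A ∪ B) = μ A + μ B


section

open Set Function Filter MeasureTheory Pointwise
open scoped Finset ENNReal symmDiff

variable {Γ α : Type*}

theorem apply_biUnion_eq_sum_of_additive {ι : Type*} {μ : Set α → ℝ}
    (h_add : ∀ A B, Disjoint A B → μ (A ∪ B) = μ A + μ B) {A : ι → Set α} (s : Finset ι)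
    (hA : (s : Set ι).PairwiseDisjoint A) : μ (⋃ i ∈ s, A i) = ∑ i ∈ s, μ (A i) := by
  classical
  induction s using Finset.induction_on with
  | empty => simpa using h_add ∅ ∅ (disjoint_empty _)
  | insert i s hi ih =>
    rw [Finset.set_biUnion_insert, Finset.sum_insert hi, h_add, ih (hA.subset (by simp))]
    exact disjoint_iUnion₂_right.2 fun j hj =>
      hA (by simp) (by simp [hj]) (ne_of_mem_of_not_mem hj hi).symm

theorem not_paradoxical_of_invariant {F : Set (Equiv.Perm α)} {μ : Set α → ℝ}
    (h_univ : μ univ = 1) (h_add : ∀ A B, Disjoint A B → μ (A ∪ B) = μ A + μ B)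
    (h_inv : ∀ φ ∈ F, ∀ A, μ (φ '' A) = μ A) : ¬ Paradoxical F := by
  have h_pieces : ∀ (n : ℕ) (A : Fin n → Set α) (φ : Fin n → Equiv.Perm α), (∀ i, φ i ∈ F) →
      Pairwise (Disjoint on A) → Pairwise (Disjoint on fun i => φ i '' A i) →
      ⋃ i, φ i '' A i = univ → μ (⋃ i, A i) = 1 := by
    intro n A φ hφ hA hφA hcover
    have h_sum : ∀ C : Fin n → Set α, Pairwise (Disjoint on C) → μ (⋃ i, C i) = ∑ i, μ (C i) :=
      fun C hC => by
        simpa using apply_biUnion_eq_sum_of_additive h_add Finset.univ (hC.set_pairwise _)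
    rw [h_sum A hA, ← h_univ, ← hcover, h_sum _ hφA]
    exact Finset.sum_congr rfl fun i _ => (h_inv _ (hφ i) _).symm
  rintro ⟨n, m, A, B, φ, ψ, hφ, hψ, -, -, hA, hB, hAB, hcover, hφA, hφcover, hψB, hψcover⟩
  have h_disj : Disjoint (⋃ i, A i) (⋃ j, B j) :=
    disjoint_iUnion_left.2 fun i => disjoint_iUnion_right.2 (hAB i)
  have := h_add _ _ h_disj
  rw [hcover, h_univ, h_pieces n A φ hφ hA hφA hφcover, h_pieces m B ψ hψ hB hψB hψcover] at this
  norm_num at this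

open Classical in
theorem bijOn_piecewise_iUnion_iterate_sdiff {f : α → α} {S C T : Set α} (hf : BijOn f S C)
    (hCT : C ⊆ T) (hTS : T ⊆ S) : BijOn ((⋃ n, f^[n] '' (S \ T)).piecewise f id) S T := by
  set E := ⋃ n, f^[n] '' (S \ T)
  have hfS : MapsTo f S S := hf.mapsTo.mono_right (hCT.trans hTS)
  have hES : E ⊆ S := iUnion_subset fun n => ((hfS.iterate n).mono_left sdiff_subset).image_subset
  have hfE : MapsTo f E E := by
    rintro - ⟨-, ⟨n, rfl⟩, z, hz, rfl⟩
    exact mem_iUnion.2 ⟨n + 1, z, hz, iterate_succ_apply' f n z⟩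
  have hSTE : S \ T ⊆ E := fun x hx => mem_iUnion.2 ⟨0, x, hx, rfl⟩
  refine ⟨fun x hx => ?_, fun x hx y hy hxy => ?_, fun y hy => ?_⟩
  · by_cases hxE : x ∈ E
    · simpa [hxE] using hCT (hf.mapsTo hx)
    · simpa [hxE] using not_not.1 fun hxT => hxE (hSTE ⟨hx, hxT⟩)
  · by_cases hxE : x ∈ E <;> by_cases hyE : y ∈ E <;>
      simp only [piecewise_eq_of_mem, piecewise_eq_of_notMem, hxE, hyE, not_false_eq_true,
        id] at hxy
    · exact hf.injOn hx hy hxy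
    · exact absurd (hxy ▸ hfE hxE) hyE
    · exact absurd (hxy ▸ hfE hyE) hxE
    · exact hxy
  · by_cases hyE : y ∈ E
    · obtain ⟨n, z, hz, rfl⟩ := mem_iUnion.1 hyE
      cases n with
      | zero => exact absurd hy hz.2
      | succ k =>
        have hkE : f^[k] z ∈ E := mem_iUnion.2 ⟨k, z, hz, rfl⟩
        exact ⟨f^[k] z, hES hkE, by simp [hkE, iterate_succ_apply']⟩
    · exact ⟨y, hTS hy, by simp [hyE]⟩

/-- The data of Mathlib's `Equidecomp` with source `S` and target `T`, without the inverse map. -/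
def Equidecomposable (Γ : Type*) [SMul Γ α] (S T : Set α) : Prop :=
  ∃ f : α → α, BijOn f S T ∧ ∃ K : Finset Γ, Equidecomp.IsDecompOn f S K

section Monoid

variable [Monoid Γ] [MulAction Γ α]

theorem Equidecomposable.exists_pieces {S T : Set α} (h : Equidecomposable Γ S T) :
    ∃ (n : ℕ) (A : Fin n → Set α) (g : Fin n → Γ), (∀ i, (A i).Nonempty) ∧
      Pairwise (Disjoint on A) ∧ ⋃ i, A i = S ∧
      Pairwise (Disjoint on fun i => g i • A i) ∧ ⋃ i, g i • A i = T := by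
  obtain ⟨f, hf, K, hK⟩ := h
  choose! c hcK hc using hK
  obtain ⟨n, e, he, he_range⟩ := ((K : Set Γ).toFinite.subset (image_subset_iff.2 hcK)).fin_param
  have h_fibre : ∀ i, S ∩ c ⁻¹' {e i} ⊆ S := fun i => inter_subset_left
  have h_image : ∀ i, e i • (S ∩ c ⁻¹' {e i}) = f '' (S ∩ c ⁻¹' {e i}) := fun i => by
    rw [← image_smul]
    exact image_congr fun x ⟨_, hx⟩ => by rw [hc x ‹_›, hx]
  have h_disj : Pairwise (Disjoint on fun i => S ∩ c ⁻¹' {e i}) := fun i j hij =>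
    disjoint_left.2 fun x ⟨_, hxi⟩ ⟨_, hxj⟩ => hij (he (hxi.symm.trans hxj))
  have h_cover : ⋃ i, S ∩ c ⁻¹' {e i} = S := by
    refine (iUnion_subset h_fibre).antisymm fun x hx => ?_
    obtain ⟨i, hi⟩ : c x ∈ range e := he_range ▸ mem_image_of_mem c hx
    exact mem_iUnion.2 ⟨i, hx, hi.symm⟩
  refine ⟨n, fun i => S ∩ c ⁻¹' {e i}, e, fun i => ?_, h_disj, h_cover, fun i j hij => ?_, ?_⟩
  · obtain ⟨x, hx, hxi⟩ : e i ∈ c '' S := he_range ▸ mem_range_self i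
    exact ⟨x, hx, hxi⟩
  · simp only [onFun, h_image]
    exact (h_disj hij).image hf.injOn (h_fibre i) (h_fibre j)
  · simp only [h_image, ← image_iUnion, h_cover, hf.image_eq]

theorem Equidecomposable.of_subset_of_subset {S C T : Set α} (h : Equidecomposable Γ S C)
    (hCT : C ⊆ T) (hTS : T ⊆ S) : Equidecomposable Γ S T := by
  classical
  obtain ⟨f, hf, K, hK⟩ := h
  refine ⟨_, bijOn_piecewise_iUnion_iterate_sdiff hf hCT hTS, insert 1 K, fun x hx => ?_⟩
  by_cases hxE : x ∈ ⋃ n, f^[n] '' (S \ T)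
  · obtain ⟨g, hg, hgx⟩ := hK x hx
    exact ⟨g, Finset.mem_insert_of_mem hg, by simp [hxE, hgx]⟩
  · exact ⟨1, Finset.mem_insert_self 1 K, by simp [hxE]⟩

end Monoid

def IsDoubling (Γ α : Type*) [SMul Γ α] [DecidableEq α] : Prop :=
  ∃ K : Finset Γ, ∀ A : Finset α, 2 * #A ≤ #(K • A)

theorem exists_injective_of_two_mul_card_le_card_smul [SMul Γ α] [DecidableEq α]
    {K : Finset Γ} (hK : ∀ A : Finset α, 2 * #A ≤ #(K • A)) :
    ∃ u : Bool × α → α, Injective u ∧ ∀ p, ∃ g ∈ K, u p = g • p.2 := by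
  have hall : ∀ s : Finset (Bool × α),
      #s ≤ #(s.biUnion fun p => K.image (· • p.2)) := fun s => by
    have h_biUnion : (s.biUnion fun p => K.image (· • p.2)) = K • s.image Prod.snd := by
      ext y
      simp only [Finset.mem_biUnion, Finset.mem_image, Finset.mem_smul]
      constructor
      · rintro ⟨p, hp, g, hg, rfl⟩
        exact ⟨g, hg, p.2, ⟨p, hp, rfl⟩, rfl⟩
      · rintro ⟨g, hg, x, ⟨p, hp, rfl⟩, rfl⟩
        exact ⟨p, hp, g, hg, rfl⟩
    calc #s ≤ #((Finset.univ : Finset Bool) ×ˢ s.image Prod.snd) :=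
          Finset.card_le_card fun p hp => Finset.mem_product.2
            ⟨Finset.mem_univ _, Finset.mem_image_of_mem _ hp⟩
      _ = 2 * #(s.image Prod.snd) := by simp
      _ ≤ _ := h_biUnion ▸ hK _
  obtain ⟨u, hu, hu_mem⟩ := (Finset.all_card_le_biUnion_card_iff_exists_injective _).1 hall
  refine ⟨u, hu, fun p => ?_⟩
  obtain ⟨g, hg, hgp⟩ := Finset.mem_image.1 (hu_mem p)
  exact ⟨g, hg, hgp.symm⟩

theorem IsDoubling.exists_equidecomposable_univ_compl [Monoid Γ] [MulAction Γ α] [DecidableEq α]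
    (h : IsDoubling Γ α) :
    ∃ D : Set α, Equidecomposable Γ univ D ∧ Equidecomposable Γ univ Dᶜ := by
  obtain ⟨K, hK⟩ := h
  obtain ⟨u, hu, hu_mem⟩ := exists_injective_of_two_mul_card_le_card_smul hK
  have h_range : ∀ b, Equidecomposable Γ univ (range fun x => u (b, x)) := fun b => by
    refine ⟨_, ?_, K, fun x _ => hu_mem (b, x)⟩
    rw [← image_univ]
    exact (hu.comp (Prod.mk_right_injective b)).injOn.bijOn_image
  refine ⟨range fun x => u (false, x), h_range false,
    (h_range true).of_subset_of_subset ?_ (subset_univ _)⟩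
  rintro - ⟨x, rfl⟩ ⟨y, hy⟩
  simpa using hu hy

theorem Subgroup.coe_image_eq_smul {F : Subgroup (Equiv.Perm α)} (g : F) (A : Set α) :
    (g : Equiv.Perm α) '' A = g • A := by
  rw [← image_smul]
  rfl

theorem paradoxical_of_equidecomposable_univ {F : Subgroup (Equiv.Perm α)} {D : Set α}
    (hD : Equidecomposable F univ D) (hDc : Equidecomposable F univ Dᶜ) :
    Paradoxical (F : Set (Equiv.Perm α)) := by
  obtain ⟨n, A, g, hA, hA_disj, hA_cover, hgA_disj, hgA_cover⟩ := hD.exists_pieces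
  obtain ⟨m, B, h, hB, hB_disj, hB_cover, hhB_disj, hhB_cover⟩ := hDc.exists_pieces
  have h_sub_D : ∀ i, g i • A i ⊆ D := fun i => hgA_cover ▸ subset_iUnion (fun i => g i • A i) i
  have h_sub_Dc : ∀ j, h j • B j ⊆ Dᶜ := fun j =>
    hhB_cover ▸ subset_iUnion (fun j => h j • B j) j
  refine ⟨n, m, fun i => g i • A i, fun j => h j • B j, fun i => ((g i)⁻¹ : F),
    fun j => ((h j)⁻¹ : F), fun i => ((g i)⁻¹).2, fun j => ((h j)⁻¹).2,
    fun i => (hA i).smul_set, fun j => (hB j).smul_set, hgA_disj, hhB_disj,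
    fun i j => disjoint_compl_right.mono (h_sub_D i) (h_sub_Dc j),
    by rw [hgA_cover, hhB_cover, union_compl_self], ?_⟩
  simp only [Subgroup.coe_image_eq_smul, inv_smul_smul]
  exact ⟨hA_disj, hA_cover, hB_disj, hB_cover⟩

def FolnerCondition (Γ α : Type*) [SMul Γ α] [DecidableEq α] : Prop :=
  ∀ (K : Finset Γ) (n : ℕ), ∃ A : Finset α, A.Nonempty ∧ ∀ g ∈ K, n * #((g • A) ∆ A) ≤ #A

theorem exists_lt_mul_of_lt_pow_mul {a : ℕ → ℝ} {r : ℝ} (hr : 0 ≤ r) {N : ℕ}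
    (h : a N < r ^ N * a 0) : ∃ k, a (k + 1) < r * a k := by
  by_contra! h'
  exact (geom_le hr N fun k _ => h' k).not_gt h

theorem ENNReal.natCast_div_le_inv_of_mul_le {a b n : ℕ} (h : n * a ≤ b) :
    (a : ℝ≥0∞) / b ≤ (n : ℝ≥0∞)⁻¹ := by
  rw [ENNReal.le_inv_iff_mul_le, div_eq_mul_inv, mul_right_comm, ← div_eq_mul_inv]
  exact ENNReal.div_le_of_le_mul (by rw [one_mul, mul_comm]; exact_mod_cast h)

theorem isFAProb_toReal {m : Set α → ℝ≥0∞} (h_univ : m univ = 1)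
    (h_add : ∀ A B, Disjoint A B → m (A ∪ B) = m A + m B) : IsFAProb fun A => (m A).toReal := by
  have h_ne_top : ∀ A, m A ≠ ∞ := fun A => by
    have h := h_add A Aᶜ disjoint_compl_right
    rw [union_compl_self, h_univ] at h
    exact ne_top_of_le_ne_top ENNReal.one_ne_top (h ▸ le_self_add)
  refine ⟨by simp [h_univ], fun A => ENNReal.toReal_nonneg, fun A B hAB => ?_⟩
  dsimp only
  rw [h_add A B hAB, ENNReal.toReal_add (h_ne_top A) (h_ne_top B)]

section Group

variable [Group Γ] [MulAction Γ α]

theorem Finset.card_smul_finset_symmDiff [DecidableEq α] (g : Γ) (A : Finset α) :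
    #((g • A) ∆ A) = 2 * #(g • A \ A) := by
  rw [symmDiff_def, Finset.sup_eq_union, Finset.card_union_of_disjoint disjoint_sdiff_sdiff,
    ← Finset.card_sdiff_comm (Finset.card_smul_finset g A), two_mul]

theorem folnerCondition_of_not_isDoubling [DecidableEq Γ] [DecidableEq α]
    (h : ¬ IsDoubling Γ α) : FolnerCondition Γ α := by
  simp only [IsDoubling, not_exists, not_forall, not_le] at h
  intro K n
  set L := insert 1 K
  -- growth by less than `r` in one step then forces `(2 * n + 1) * #(g • B \ B) < #B`
  set r : ℝ := 1 + (2 * n + 1 : ℝ)⁻¹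
  obtain ⟨N, hN⟩ := pow_unbounded_of_one_lt 2 (lt_add_of_pos_right 1 (by positivity) : 1 < r)
  obtain ⟨A, hA⟩ := h (L ^ N)
  obtain ⟨k, hk⟩ : ∃ k, (#(L ^ (k + 1) • A) : ℝ) < r * #(L ^ k • A) := by
    refine exists_lt_mul_of_lt_pow_mul (a := fun i => (#(L ^ i • A) : ℝ)) (N := N)
      (by positivity) ?_
    calc (#(L ^ N • A) : ℝ) < 2 * #A := by exact_mod_cast hA
      _ ≤ r ^ N * #(L ^ 0 • A) := by simpa using mul_le_mul_of_nonneg_right hN.le (by positivity)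
  set B := L ^ k • A
  refine ⟨B, (Finset.insert_nonempty 1 K).pow.smul (Finset.card_pos.1 (by omega)), fun g hg => ?_⟩
  have h_sub : g • B ∪ B ⊆ L • B := Finset.union_subset
    (Finset.smul_finset_subset_smul (Finset.mem_insert_of_mem hg))
    (by simpa using Finset.smul_finset_subset_smul (t := B) (Finset.mem_insert_self 1 K))
  have h_card : #(g • B \ B) + #B ≤ #(L ^ (k + 1) • A) := by
    rw [pow_succ', mul_smul]
    exact (Finset.card_sdiff_add_card _ _).trans_le (Finset.card_le_card h_sub)
  have h_sdiff : (2 * n + 1) * #(g • B \ B) < #B := by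
    have : (#(g • B \ B) : ℝ) < (2 * n + 1 : ℝ)⁻¹ * #B := by
      have := (Nat.cast_le (α := ℝ)).2 h_card
      push_cast at this
      linarith
    exact_mod_cast (lt_inv_mul_iff₀ (by positivity)).1 this
  rw [Finset.card_smul_finset_symmDiff]
  nlinarith

theorem FolnerCondition.exists_isFoelner [DecidableEq α] [MeasurableSpace α]
    [MeasurableSingletonClass α] (h : FolnerCondition Γ α) :
    ∃ F : Finset Γ × ℕ → Set α, IsFoelner Γ Measure.count atTop F := by
  choose A hA_ne hA using fun p : Finset Γ × ℕ => h p.1 p.2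
  refine ⟨fun p => A p, .of_forall fun p => (A p).measurableSet,
    .of_forall fun p => by simpa [Measure.count_apply_finset] using (hA_ne p).ne_empty,
    .of_forall fun p => by simp [Measure.count_apply_finset], fun g => ?_⟩
  rw [ENNReal.tendsto_nhds_zero]
  intro ε hε
  obtain ⟨N, hN⟩ := ENNReal.exists_inv_nat_lt hε.ne'
  filter_upwards [eventually_ge_atTop ({g}, N)] with p hp
  obtain ⟨hg, hNp⟩ := Prod.mk_le_mk.1 hp
  rw [← Finset.coe_smul_finset, ← Finset.coe_symmDiff, Measure.count_apply_finset,
    Measure.count_apply_finset]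
  calc _ ≤ (p.2 : ℝ≥0∞)⁻¹ :=
        ENNReal.natCast_div_le_inv_of_mul_le (hA p g (Finset.singleton_subset_iff.1 hg))
    _ ≤ (N : ℝ≥0∞)⁻¹ := ENNReal.inv_le_inv.2 (by exact_mod_cast hNp)
    _ ≤ ε := hN.le

instance [MeasurableSpace α] [DiscreteMeasurableSpace α] :
    SMulInvariantMeasure Γ α Measure.count :=
  ⟨fun g A _ => by
    rw [preimage_smul, Measure.count_apply .of_discrete, Measure.count_apply .of_discrete,
      encard_smul_set]⟩

theorem FolnerCondition.exists_isFAProb_smul_eq [DecidableEq α] (h : FolnerCondition Γ α) :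
    ∃ μ : Set α → ℝ, IsFAProb μ ∧ ∀ (g : Γ) (A : Set α), μ (g • A) = μ A := by
  classical
  let : MeasurableSpace α := ⊤
  obtain ⟨F, hF⟩ := h.exists_isFoelner
  obtain ⟨m, h_univ, h_add, h_inv⟩ := hF.amenable
  exact ⟨fun A => (m A).toReal, isFAProb_toReal h_univ fun A B => h_add A B .of_discrete,
    fun g A => congrArg ENNReal.toReal (h_inv g A)⟩

end Group

end

/-- Tarski's alternative for `F`-actions: `G` is `F`-amenable (admits an
`F`-invariant finitely additive probability measure on P(G)) iff `G` admits no
`F`-paradoxical decomposition. -/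
theorem stmt7 {G : Type*} (F : Subgroup (Equiv.Perm G)) :
    (∃ μ : Set G → ℝ, IsFAProb μ ∧
        ∀ φ ∈ (F : Set (Equiv.Perm G)), ∀ A : Set G, μ (φ '' A) = μ A) ↔
      ¬ Paradoxical (F : Set (Equiv.Perm G)) := by
  classical
  refine ⟨fun ⟨μ, ⟨h_univ, _, h_add⟩, h_inv⟩ => not_paradoxical_of_invariant h_univ h_add h_inv,
    fun hP => ?_⟩
  by_cases h_doubling : IsDoubling F G
  · obtain ⟨D, hD, hDc⟩ := h_doubling.exists_equidecomposable_univ_compl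
    exact absurd (paradoxical_of_equidecomposable_univ hD hDc) hP
  · obtain ⟨μ, hμ, h_inv⟩ :=
      (folnerCondition_of_not_isDoubling h_doubling).exists_isFAProb_smul_eq
    exact ⟨μ, hμ, fun φ hφ A => by rw [← h_inv ⟨φ, hφ⟩ A, ← Subgroup.coe_image_eq_smul]⟩
end

section
/- Let S be a nonempty set, F ⊆ S^S, φ = (φ₁,…,φₙ) a sequence in F, and 𝓔 = {E₁,…,Eₘ} a finite partition of S. Suppose X ⊆ S is a nonempty finite set with |φᵢ⁻¹(Eⱼ) ∩ X| = |Eⱼ ∩ X| for all i, j. For each configuration C ∈ Con(φ,𝓔) set f_C = |X ∩ x₀(C)| / |X|, where x₀(C) = E_{c₀} ∩ φ₁⁻¹(E_{c₁}) ∩ … ∩ φₙ⁻¹(E_{cₙ}). Then (f_C) is a normalized solution of the configuration equations: f_C ≥ 0, Σ_C f_C = 1, and for all i ∈ {1,…,n}, j ∈ {1,…,m}: Σ{f_C : cᵢ(C) = j} = Σ{f_C : c₀(C) = j}. -/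
/-!
Choose the class map `cls : S → Fin m` of the partition. The atom `x₀(C)` is then the fibre
over `C` of `s ↦ (cls s, (cls (φᵢ s))ᵢ)`, so summing `|X ∩ x₀(C)|` over a set `T` of
configurations counts the points of `X` whose configuration lies in `T`. For all `C` this is
`|X|`; for `cᵢ(C) = j` it is `|X ∩ φᵢ⁻¹(Eⱼ)|` and for `c₀(C) = j` it is `|X ∩ Eⱼ|`, which agree
by hypothesis.
-/

/-- The atom `x₀(C)` of the configuration `C = (c₀, (cᵢ))` for the maps `φ` and
the partition `E`: `x₀(C) = E_{c₀} ∩ ⋂ᵢ φᵢ⁻¹(E_{cᵢ})`. -/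
def atom {S : Type*} {n m : ℕ} (φ : Fin n → S → S) (E : Fin m → Set S)
    (C : Fin m × (Fin n → Fin m)) : Set S :=
  E C.1 ∩ ⋂ i, (φ i) ⁻¹' (E (C.2 i))

open Finset in
theorem Set.ncard_inter_preimage_eq_sum {α κ : Type*} {X : Set α}
    (hX : X.Finite) (g : α → κ) (t : Finset κ) :
    (X ∩ g ⁻¹' t).ncard = ∑ c ∈ t, (X ∩ g ⁻¹' {c}).ncard := by
  classical
  have hpre : X ∩ g ⁻¹' t = ↑{a ∈ hX.toFinset | g a ∈ t} := by ext; simp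
  have hfiber (c : κ) : X ∩ g ⁻¹' {c} = ↑{a ∈ hX.toFinset | g a = c} := by ext; simp
  simp_rw [hpre, hfiber, Set.ncard_coe_finset]
  rw [card_eq_sum_card_fiberwise (s := {a ∈ hX.toFinset | g a ∈ t})
    fun a ha => (mem_filter.1 ha).2]
  refine sum_congr rfl fun c hc => congrArg card ?_
  ext a
  simp only [mem_filter]
  grind

theorem exists_mem_iff_eq_of_iUnion_eq_univ {α ι : Type*} {E : ι → Set α}
    (hdisj : Pairwise (Function.onFun Disjoint E)) (hcov : ⋃ j, E j = Set.univ) :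
    ∃ cls : α → ι, ∀ a j, a ∈ E j ↔ cls a = j := by
  choose cls hcls using fun a => Set.mem_iUnion.1 (hcov ▸ Set.mem_univ a)
  refine ⟨cls, fun a j => ⟨fun ha => ?_, fun h => h ▸ hcls a⟩⟩
  by_contra hne
  exact Set.disjoint_left.1 (hdisj hne) (hcls a) ha

def config {S : Type*} {n m : ℕ} (φ : Fin n → S → S) (cls : S → Fin m) (s : S) :
    Fin m × (Fin n → Fin m) :=
  (cls s, fun i => cls (φ i s))

theorem atom_eq_preimage_config {S : Type*} {n m : ℕ} (φ : Fin n → S → S)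
    {E : Fin m → Set S} {cls : S → Fin m} (hcls : ∀ s j, s ∈ E j ↔ cls s = j)
    (C : Fin m × (Fin n → Fin m)) :
    atom φ E C = config φ cls ⁻¹' {C} := by
  ext s
  simp only [atom, config, Set.mem_inter_iff, Set.mem_iInter, Set.mem_preimage, hcls,
    Set.mem_singleton_iff, Prod.ext_iff, funext_iff]

theorem stmt17_general {S : Type*} (n m : ℕ)
    (φ : Fin n → S → S)
    (E : Fin m → Set S)
    (hdisj : Pairwise (Function.onFun Disjoint E))
    (hcov : (⋃ j, E j) = Set.univ)
    (X : Set S) (hXfin : X.Finite) (hXne : X.Nonempty)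
    (hX : ∀ (i : Fin n) (j : Fin m),
      ((φ i) ⁻¹' (E j) ∩ X).ncard = (E j ∩ X).ncard) :
    -- the normalized solution f_C = |X ∩ x₀(C)| / |X|
    (∀ C : Fin m × (Fin n → Fin m),
        0 ≤ ((X ∩ atom φ E C).ncard : ℝ) / (X.ncard : ℝ)) ∧
    (∑ C : Fin m × (Fin n → Fin m),
        ((X ∩ atom φ E C).ncard : ℝ) / (X.ncard : ℝ)) = 1 ∧
    ∀ (i : Fin n) (j : Fin m),
      (∑ C ∈ Finset.univ.filter (fun C : Fin m × (Fin n → Fin m) => C.2 i = j),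
          ((X ∩ atom φ E C).ncard : ℝ) / (X.ncard : ℝ)) =
      ∑ C ∈ Finset.univ.filter (fun C : Fin m × (Fin n → Fin m) => C.1 = j),
          ((X ∩ atom φ E C).ncard : ℝ) / (X.ncard : ℝ) := by
  obtain ⟨cls, hcls⟩ := exists_mem_iff_eq_of_iUnion_eq_univ hdisj hcov
  have hsum (t : Finset (Fin m × (Fin n → Fin m))) :
      ∑ C ∈ t, ((X ∩ atom φ E C).ncard : ℝ) / X.ncard =
        (X ∩ config φ cls ⁻¹' t).ncard / X.ncard := by
    simp_rw [← Finset.sum_div, Set.ncard_inter_preimage_eq_sum hXfin,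
      atom_eq_preimage_config φ hcls, Nat.cast_sum]
  refine ⟨fun C => by positivity, ?_, fun i j => ?_⟩
  · have hXpos : (0 : ℝ) < X.ncard := by exact_mod_cast (Set.ncard_pos hXfin).2 hXne
    rw [hsum, Finset.coe_univ, Set.preimage_univ, Set.inter_univ, div_self hXpos.ne']
  · have hpre_φ : config φ cls ⁻¹' ↑(Finset.univ.filter fun C : Fin m × (Fin n → Fin m) =>
        C.2 i = j) = φ i ⁻¹' E j := by
      ext s; simp [config, hcls]
    have hpre_E : config φ cls ⁻¹' ↑(Finset.univ.filter fun C : Fin m × (Fin n → Fin m) =>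
        C.1 = j) = E j := by
      ext s; simp [config, hcls]
    rw [hsum, hsum, hpre_φ, hpre_E, Set.inter_comm, hX, Set.inter_comm]

theorem stmt17 {S : Type*} [Nonempty S] (F : Set (S → S)) (n m : ℕ)
    (φ : Fin n → S → S) (hφ : ∀ i, φ i ∈ F)
    (E : Fin m → Set S)
    (hdisj : Pairwise (Function.onFun Disjoint E))
    (hcov : (⋃ j, E j) = Set.univ)
    (X : Set S) (hXfin : X.Finite) (hXne : X.Nonempty)
    (hX : ∀ (i : Fin n) (j : Fin m),
      ((φ i) ⁻¹' (E j) ∩ X).ncard = (E j ∩ X).ncard) :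
    -- the normalized solution f_C = |X ∩ x₀(C)| / |X|
    (∀ C : Fin m × (Fin n → Fin m),
        0 ≤ ((X ∩ atom φ E C).ncard : ℝ) / (X.ncard : ℝ)) ∧
    (∑ C : Fin m × (Fin n → Fin m),
        ((X ∩ atom φ E C).ncard : ℝ) / (X.ncard : ℝ)) = 1 ∧
    ∀ (i : Fin n) (j : Fin m),
      (∑ C ∈ Finset.univ.filter (fun C : Fin m × (Fin n → Fin m) => C.2 i = j),
          ((X ∩ atom φ E C).ncard : ℝ) / (X.ncard : ℝ)) =
      ∑ C ∈ Finset.univ.filter (fun C : Fin m × (Fin n → Fin m) => C.1 = j),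
          ((X ∩ atom φ E C).ncard : ℝ) / (X.ncard : ℝ) :=
  stmt17_general n m φ E hdisj hcov X hXfin hXne hX
end
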